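/- arXiv:1907.04349 — 6 statements merged into one kernel-verified Lean document; each statement's English description precedes it below -/
import Mathlib

section
/- Let Γ be a connected signed graph whose adjacency matrix A has m distinct eigenvalues. Then the signed diameter of Γ is at most m - 1, where two vertices u and v are at signed distance k if their graph distance is k and the (u,v)-entry of A^k is nonzero, and the signed diameter is the maximum signed distance over all pairs (set to 0 for a pair when the relevant entry of A^k vanishes). -/
/-!
If `(A ^ i) u v ≠ 0` there is a walk of length `i` from `u` to `v`, so all entries `(A ^ i) u v`
with `i < dist u v` vanish. A Hermitian `A` with `m` distinct eigenvalues is annihilated by a monic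
polynomial of degree `m`, so every power of `A` is a linear combination of `1, A, …, A ^ (m - 1)`.
Hence if `dist u v ≥ m`, the entry `(A ^ dist u v) u v` vanishes too.
-/

open Polynomial

theorem Polynomial.pow_mem_of_aeval_eq_zero {R S : Type*} [CommRing R] [Ring S] [Algebra R S]
    {q : R[X]} (hq : q.Monic) {x : S} (hx : aeval x q = 0) {N : Submodule R S}
    (hN : ∀ i < q.natDegree, x ^ i ∈ N) (k : ℕ) : x ^ k ∈ N := by
  rw [← aeval_X_pow (R := R), ← aeval_modByMonic_eq_self_of_root hx]
  by_cases hq1 : q = 1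
  · simp [hq1]
  rw [aeval_eq_sum_range' (natDegree_modByMonic_lt _ hq hq1)]
  exact N.sum_mem fun i hi => N.smul_mem _ (hN i (Finset.mem_range.1 hi))

theorem aeval_eq_zero_of_forall_mem_spectrum_isRoot {R A : Type*} {p : A → Prop}
    [CommSemiring R] [StarRing R] [MetricSpace R] [IsTopologicalSemiring R] [ContinuousStar R]
    [TopologicalSpace A] [Ring A] [StarRing A] [Algebra R A] [ContinuousFunctionalCalculus R A p]
    {a : A} (ha : p a) {q : R[X]} (hq : ∀ x ∈ spectrum R a, q.IsRoot x) : aeval a q = 0 := by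
  rw [← cfc_polynomial q a ha, cfc_congr (g := 0) hq, cfc_zero]

theorem Matrix.IsHermitian.aeval_prod_X_sub_C_eigenvalues {n 𝕜 : Type*} [Fintype n]
    [DecidableEq n] [RCLike 𝕜] {A : Matrix n n 𝕜} (hA : A.IsHermitian) :
    aeval A (∏ μ ∈ Finset.univ.image hA.eigenvalues, (X - C μ)) = 0 := by
  refine aeval_eq_zero_of_forall_mem_spectrum_isRoot hA.isSelfAdjoint fun x hx => ?_
  obtain ⟨i, rfl⟩ := hA.spectrum_real_eq_range_eigenvalues ▸ hx
  simp [IsRoot, eval_prod, Finset.prod_eq_zero_iff, sub_eq_zero]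

namespace SimpleGraph

variable {V R : Type*} [Fintype V] [DecidableEq V] [Semiring R] {G : SimpleGraph V}
  {A : Matrix V V R}

theorem exists_walk_length_eq_of_pow_apply_ne_zero (hA : ∀ i j, ¬ G.Adj i j → A i j = 0)
    (k : ℕ) {u v : V} (huv : (A ^ k) u v ≠ 0) : ∃ p : G.Walk u v, p.length = k := by
  induction k generalizing u with
  | zero =>
    obtain rfl : u = v := by
      by_contra h
      simp [Matrix.one_apply_ne h] at huv
    exact ⟨.nil, rfl⟩
  | succ k ih =>
    rw [pow_succ', Matrix.mul_apply] at huv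
    obtain ⟨w, -, huw⟩ := Finset.exists_ne_zero_of_sum_ne_zero huv
    have hadj : G.Adj u w := by
      by_contra h
      simp [hA u w h] at huw
    obtain ⟨p, hp⟩ := ih (right_ne_zero_of_mul huw)
    exact ⟨.cons hadj p, by simp [hp]⟩

theorem dist_le_of_pow_apply_ne_zero (hA : ∀ i j, ¬ G.Adj i j → A i j = 0) {k : ℕ} {u v : V}
    (huv : (A ^ k) u v ≠ 0) : G.dist u v ≤ k := by
  obtain ⟨p, rfl⟩ := exists_walk_length_eq_of_pow_apply_ne_zero hA k huv
  exact dist_le p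

end SimpleGraph

theorem stmt_5_general {n : ℕ} (G : SimpleGraph (Fin n))
    (A : Matrix (Fin n) (Fin n) ℝ)
    (hnadj : ∀ i j, ¬ G.Adj i j → A i j = 0)
    (hH : A.IsHermitian)
    (m : ℕ) (hm : m = (Finset.univ.image hH.eigenvalues).card) :
    ∀ u v : Fin n, (A ^ (G.dist u v)) u v ≠ 0 → G.dist u v ≤ m - 1 := by
  intro u v huv
  suffices G.dist u v < m by omega
  by_contra! hmk
  have hlow : ∀ i < m, A ^ i ∈ LinearMap.ker (Matrix.entryLinearMap ℝ ℝ u v) := by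
    intro i hi
    rw [LinearMap.mem_ker, Matrix.entryLinearMap_apply]
    by_contra h
    have := G.dist_le_of_pow_apply_ne_zero hnadj h
    omega
  exact huv (pow_mem_of_aeval_eq_zero (monic_prod_of_monic _ _ fun μ _ => monic_X_sub_C μ)
    hH.aeval_prod_X_sub_C_eigenvalues (fun i hi => hlow i (by simpa [hm] using hi)) _)

/-- Let Γ be a connected signed graph whose adjacency matrix A has m distinct
eigenvalues.  Then the signed diameter of Γ is at most m - 1: whenever two vertices u, v at
graph distance k have (A^k) u v ≠ 0 (i.e. they are at signed distance k), then k ≤ m - 1. -/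
theorem stmt_5 {n : ℕ} [NeZero n] (G : SimpleGraph (Fin n)) [DecidableRel G.Adj]
    (hconn : G.Connected)
    (A : Matrix (Fin n) (Fin n) ℝ) (hA : A.IsSymm)
    (hadj : ∀ i j, G.Adj i j → (A i j = 1 ∨ A i j = -1))
    (hnadj : ∀ i j, ¬ G.Adj i j → A i j = 0)
    (hH : A.IsHermitian)
    (m : ℕ) (hm : m = (Finset.univ.image hH.eigenvalues).card) :
    ∀ u v : Fin n, (A ^ (G.dist u v)) u v ≠ 0 → G.dist u v ≤ m - 1 :=
  stmt_5_general G A hnadj hH m hm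
end

section
/- If a signed graph Γ has an adjacency spectrum symmetric with respect to the origin, then the number of positive triangles in Γ equals the number of negative triangles in Γ. In particular, a signed graph containing in total an odd number of triangles cannot have symmetric spectrum (and hence cannot be sign-symmetric). -/
/-! Since `A` is symmetric, `tr A³ = ∑ λᵢ³`, and a spectrum symmetric under `λ ↦ -λ` makes this
sum of odd powers vanish. On the other hand `A` has zero diagonal, so a term `A_ab A_bc A_ca` of
`tr A³` is nonzero only when `{a, b, c}` is a triangle; each triangle occurs once for each of its
`3! = 6` orderings and contributes its sign, so `tr A³ = 6 (#positive - #negative)`. -/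

open Finset Function

theorem Matrix.IsHermitian.trace_pow_eq_sum_eigenvalues_pow {𝕜 n : Type*} [RCLike 𝕜] [Fintype n]
    [DecidableEq n] {A : Matrix n n 𝕜} (hA : A.IsHermitian) (k : ℕ) :
    (A ^ k).trace = ∑ i, (hA.eigenvalues i : 𝕜) ^ k := by
  conv_lhs => rw [hA.spectral_theorem, ← map_pow, Matrix.diagonal_pow,
    Unitary.conjStarAlgAut_apply, Matrix.trace_mul_cycle, Unitary.coe_star_mul_self, one_mul,
    Matrix.trace_diagonal]
  rfl

theorem Multiset.sum_map_pow_eq_zero_of_map_neg_eq {R : Type*} [Ring R] [IsAddTorsionFree R]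
    {m : Multiset R} (hm : m.map (fun x => -x) = m) {k : ℕ} (hk : Odd k) :
    (m.map (· ^ k)).sum = 0 := by
  refine self_eq_neg.mp ?_
  conv_lhs => rw [← hm]
  simp [Multiset.map_map, hk.neg_pow, Multiset.sum_map_neg]

theorem Finset.sum_eq_card_filter_sub_card_filter_of_eq_one_or_eq_neg_one {ι R : Type*} [Ring R]
    [Nontrivial R] [IsAddTorsionFree R] [DecidableEq R] (s : Finset ι) (f : ι → R)
    (hf : ∀ i ∈ s, f i = 1 ∨ f i = -1) :
    ∑ i ∈ s, f i = #(s.filter (f · = 1)) - #(s.filter (f · = -1)) := by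
  have hne : (1 : R) ≠ -1 := fun h => one_ne_zero (self_eq_neg.mp h)
  have hneg : s.filter (¬ f · = 1) = s.filter (f · = -1) :=
    filter_congr fun i hi => by rcases hf i hi with h | h <;> simp [h, hne, hne.symm]
  rw [← sum_filter_add_sum_filter_not s (f · = 1), hneg,
    sum_congr rfl fun i hi => (mem_filter.mp hi).2,
    sum_congr rfl fun i hi => (mem_filter.mp hi).2]
  simp [sub_eq_add_neg]

theorem Tuple.strictMono_comp_iff_eq_sort {α : Type*} [LinearOrder α] {k : ℕ} {t : Fin k → α}
    (ht : Injective t) {σ : Equiv.Perm (Fin k)} : StrictMono (t ∘ σ) ↔ σ = Tuple.sort t := by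
  rw [Tuple.eq_sort_iff]
  exact ⟨fun h => ⟨h.monotone, fun i j hij he => absurd (σ.injective (ht he)) hij.ne⟩,
    fun h => h.1.strictMono_of_injective (ht.comp σ.injective)⟩

open Classical in
theorem Fintype.sum_eq_factorial_smul_sum_strictMono {α M : Type*} [LinearOrder α] [Fintype α]
    [AddCommMonoid M] {k : ℕ} (f : (Fin k → α) → M)
    (hf : ∀ (σ : Equiv.Perm (Fin k)) t, f (t ∘ σ) = f t)
    (hinj : ∀ t, ¬ Injective t → f t = 0) :
    ∑ t, f t = k.factorial • ∑ t with StrictMono t, f t := by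
  -- an injective `t` has exactly one sorting permutation; otherwise all terms vanish
  have hsort : ∀ t, f t =
      ∑ σ : Equiv.Perm (Fin k), if StrictMono (t ∘ σ) then f (t ∘ σ) else 0 := by
    intro t
    by_cases ht : Injective t
    · simp [Tuple.strictMono_comp_iff_eq_sort ht, hf]
    · simp [hinj t ht, hf]
  calc ∑ t, f t
      = ∑ σ : Equiv.Perm (Fin k), ∑ t, if StrictMono (t ∘ σ) then f (t ∘ σ) else 0 := by
        rw [Finset.sum_comm]; exact Finset.sum_congr rfl fun t _ => hsort t
    _ = ∑ _σ : Equiv.Perm (Fin k), ∑ t with StrictMono t, f t := by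
        refine Finset.sum_congr rfl fun σ _ => ?_
        rw [sum_filter]
        exact Equiv.sum_comp (σ.symm.arrowCongr (Equiv.refl α))
          (fun t => if StrictMono t then f t else 0)
    _ = k.factorial • ∑ t with StrictMono t, f t := by simp [Fintype.card_perm]

def finThreeArrowEquiv (α : Type*) : (Fin 3 → α) ≃ α × α × α where
  toFun t := (t 0, t 1, t 2)
  invFun u := ![u.1, u.2.1, u.2.2]
  left_inv t := by ext i; fin_cases i <;> rfl
  right_inv _ := rfl

@[simp]
theorem finThreeArrowEquiv_apply {α : Type*} (t : Fin 3 → α) :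
    finThreeArrowEquiv α t = (t 0, t 1, t 2) := rfl

theorem Fintype.sum_prod_eq_six_smul_sum_sorted {α M : Type*} [LinearOrder α] [Fintype α]
    [AddCommMonoid M] (f : α × α × α → M) (hcycle : ∀ a b c, f (a, b, c) = f (b, c, a))
    (hswap : ∀ a b c, f (a, b, c) = f (b, a, c)) (hdiag : ∀ a c, f (a, a, c) = 0) :
    ∑ u, f u = 6 • ∑ u with u.1 < u.2.1 ∧ u.2.1 < u.2.2, f u := by
  classical
  set g : (Fin 3 → α) → M := f ∘ finThreeArrowEquiv α
  have hperm : ∀ (σ : Equiv.Perm (Fin 3)) t, g (t ∘ σ) = g t := by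
    have hσ : ∀ σ : Equiv.Perm (Fin 3), (σ 0, σ 1, σ 2) ∈ ({(0, 1, 2), (1, 2, 0), (2, 0, 1),
        (1, 0, 2), (0, 2, 1), (2, 1, 0)} : Finset (Fin 3 × Fin 3 × Fin 3)) := by decide
    intro σ t
    simp only [mem_insert, mem_singleton, Prod.mk.injEq] at hσ
    obtain ⟨h0, h1, h2⟩ | ⟨h0, h1, h2⟩ | ⟨h0, h1, h2⟩ | ⟨h0, h1, h2⟩ | ⟨h0, h1, h2⟩ |
      ⟨h0, h1, h2⟩ := hσ σ <;>
    simp only [g, comp_apply, finThreeArrowEquiv_apply, h0, h1, h2] <;>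
    grind
  have hinj : ∀ t, ¬ Injective t → g t = 0 := by
    intro t ht
    have : t 0 = t 1 ∨ t 0 = t 2 ∨ t 1 = t 2 := by
      contrapose! ht
      intro i j hij
      fin_cases i <;> fin_cases j <;> simp_all [eq_comm]
    simp only [g, comp_apply, finThreeArrowEquiv_apply]
    rcases this with h | h | h <;> rw [h] <;> grind
  calc ∑ u, f u = ∑ t, g t := (Equiv.sum_comp (finThreeArrowEquiv α) f).symm
    _ = 6 • ∑ t with StrictMono t, g t := Fintype.sum_eq_factorial_smul_sum_strictMono g hperm hinj
    _ = 6 • ∑ u with u.1 < u.2.1 ∧ u.2.1 < u.2.2, f u := by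
        congr 1
        refine Finset.sum_equiv (finThreeArrowEquiv α) (fun t => ?_) (fun _ _ => rfl)
        simp [Fin.strictMono_iff_lt_succ, Fin.forall_fin_two]

theorem Matrix.IsSymm.trace_pow_three_eq_six_mul_sum {n R : Type*} [Fintype n] [LinearOrder n]
    [CommRing R] {A : Matrix n n R} (hA : A.IsSymm) (hdiag : ∀ i, A i i = 0) :
    (A ^ 3).trace = 6 * ∑ u : n × n × n with u.1 < u.2.1 ∧ u.2.1 < u.2.2,
      A u.1 u.2.1 * A u.2.1 u.2.2 * A u.1 u.2.2 := by
  have hwalks : (A ^ 3).trace = ∑ u : n × n × n, A u.1 u.2.1 * A u.2.1 u.2.2 * A u.2.2 u.1 := by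
    simp only [pow_three', Matrix.trace, Matrix.diag, Matrix.mul_apply, sum_mul,
      Fintype.sum_prod_type]
    exact sum_congr rfl fun i _ => sum_comm
  rw [hwalks, Fintype.sum_prod_eq_six_smul_sum_sorted, nsmul_eq_mul, Nat.cast_ofNat]
  · exact congrArg _ (sum_congr rfl fun u _ => by rw [hA.apply u.1 u.2.2])
  · intro a b c; ring
  · intro a b c; rw [hA.apply a b, hA.apply b c, hA.apply c a]; ring
  · intro a c; simp [hdiag]

theorem stmt_6_general {n : ℕ} (G : SimpleGraph (Fin n)) [DecidableRel G.Adj]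
    (s : Fin n → Fin n → ℝ)
    (hsign : ∀ i j, G.Adj i j → s i j = 1 ∨ s i j = -1)
    (A : Matrix (Fin n) (Fin n) ℝ)
    (hA : ∀ i j, A i j = if G.Adj i j then s i j else 0)
    (hH : A.IsHermitian)
    (hsymmspec : Multiset.map (fun x => -x) (Multiset.map hH.eigenvalues Finset.univ.val)
      = Multiset.map hH.eigenvalues Finset.univ.val)
    (tri : Finset (Fin n × Fin n × Fin n))
    (htri : tri = Finset.univ.filter (fun t => t.1 < t.2.1 ∧ t.2.1 < t.2.2 ∧
      G.Adj t.1 t.2.1 ∧ G.Adj t.2.1 t.2.2 ∧ G.Adj t.1 t.2.2)) :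
    (tri.filter (fun t => s t.1 t.2.1 * s t.2.1 t.2.2 * s t.1 t.2.2 = 1)).card
      = (tri.filter (fun t => s t.1 t.2.1 * s t.2.1 t.2.2 * s t.1 t.2.2 = -1)).card := by
  set sign : Fin n × Fin n × Fin n → ℝ := fun t => s t.1 t.2.1 * s t.2.1 t.2.2 * s t.1 t.2.2
  have htrace_zero : (A ^ 3).trace = 0 := by
    rw [hH.trace_pow_eq_sum_eigenvalues_pow]
    have h := Multiset.sum_map_pow_eq_zero_of_map_neg_eq hsymmspec (k := 3) (by decide)
    rw [Multiset.map_map] at h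
    exact h
  have htrace_six : (A ^ 3).trace = 6 * ∑ t ∈ tri, sign t := by
    rw [(Matrix.isHermitian_iff_isSymm.mp hH).trace_pow_three_eq_six_mul_sum
      (fun i => by simp [hA]), htri, sum_filter, sum_filter]
    refine congrArg _ (sum_congr rfl fun u _ => ?_)
    simp only [hA, sign]
    split_ifs <;> simp_all
  have hsign_tri : ∀ t ∈ tri, sign t = 1 ∨ sign t = -1 := by
    intro t ht
    rw [htri, mem_filter] at ht
    obtain ⟨-, -, -, h1, h2, h3⟩ := ht
    rcases hsign _ _ h1 with e1 | e1 <;> rcases hsign _ _ h2 with e2 | e2 <;>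
      rcases hsign _ _ h3 with e3 | e3 <;> simp [sign, e1, e2, e3]
  rw [htrace_six, sum_eq_card_filter_sub_card_filter_of_eq_one_or_eq_neg_one tri sign
    hsign_tri] at htrace_zero
  have hcount : ((tri.filter (sign · = 1)).card : ℝ) = (tri.filter (sign · = -1)).card := by
    linarith
  exact_mod_cast hcount

/-- If the adjacency spectrum of a signed graph is symmetric with respect to
the origin (the multiset of eigenvalues is invariant under λ ↦ -λ), then the number of
positive triangles equals the number of negative triangles.  In particular, a signed graph
with an odd total number of triangles cannot have symmetric spectrum. -/
theorem stmt_6 {n : ℕ} (G : SimpleGraph (Fin n)) [DecidableRel G.Adj]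
    (s : Fin n → Fin n → ℝ)
    (hssymm : ∀ i j, s i j = s j i)
    (hsign : ∀ i j, G.Adj i j → s i j = 1 ∨ s i j = -1)
    (A : Matrix (Fin n) (Fin n) ℝ)
    (hA : ∀ i j, A i j = if G.Adj i j then s i j else 0)
    (hH : A.IsHermitian)
    (hsymmspec : Multiset.map (fun x => -x) (Multiset.map hH.eigenvalues Finset.univ.val)
      = Multiset.map hH.eigenvalues Finset.univ.val)
    (tri : Finset (Fin n × Fin n × Fin n))
    (htri : tri = Finset.univ.filter (fun t => t.1 < t.2.1 ∧ t.2.1 < t.2.2 ∧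
      G.Adj t.1 t.2.1 ∧ G.Adj t.2.1 t.2.2 ∧ G.Adj t.1 t.2.2)) :
    (tri.filter (fun t => s t.1 t.2.1 * s t.2.1 t.2.2 * s t.1 t.2.2 = 1)).card
      = (tri.filter (fun t => s t.1 t.2.1 * s t.2.1 t.2.2 * s t.1 t.2.2 = -1)).card :=
  stmt_6_general G s hsign A hA hH hsymmspec tri htri
end

section
/- Let Γ be a signed graph on n vertices with m edges and any signature σ. Then the spectral radius satisfies ρ(Γ) ≥ √(2m/n), i.e., ρ(Γ) ≥ √k where k is the average degree of the underlying graph. Equality holds if and only if A(Γ)² = k·I, i.e., A(Γ) is a symmetric weighing matrix of weight k (forcing the underlying graph to be k-regular). -/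
/-!
Squaring the signed adjacency matrix kills the signs on the diagonal: `(A * A) i i = deg i`, so
`trace (A * A) = 2m`. On the spectral side `trace (A * A) = ∑ λᵢ²`, so the eigenvalues have mean
square `k = 2m / n`, and the largest `|λᵢ|` is at least `√k`, with equality exactly when every
`λᵢ² = k`. Through the functional calculus, `λᵢ² = k` for all `i` says `A * A = k • 1`.
-/

open Finset

namespace Matrix.IsHermitian

variable {𝕜 n : Type*} [RCLike 𝕜] [Fintype n] [DecidableEq n] {A : Matrix n n 𝕜}

theorem trace_mul_self (hA : A.IsHermitian) :
    (A * A).trace = ∑ i, ((hA.eigenvalues i ^ 2 : ℝ) : 𝕜) := by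
  rw [← sq, ← cfc_pow_id (R := ℝ) A 2 hA.isSelfAdjoint, cfc_eq hA, IsHermitian.cfc,
    Unitary.conjStarAlgAut_apply, trace_mul_cycle, Unitary.coe_star_mul_self, one_mul,
    trace_diagonal]
  rfl

theorem mul_self_eq_smul_one_iff (hA : A.IsHermitian) (c : ℝ) :
    A * A = c • (1 : Matrix n n 𝕜) ↔ ∀ i, hA.eigenvalues i ^ 2 = c := by
  rw [← sq, ← cfc_pow_id (R := ℝ) A 2 hA.isSelfAdjoint, Algebra.smul_def, mul_one,
    ← cfc_const c A hA.isSelfAdjoint, cfc_eq_cfc_iff_eqOn hA.isSelfAdjoint,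
    hA.spectrum_real_eq_range_eigenvalues]
  exact Set.forall_mem_range

end Matrix.IsHermitian

namespace SimpleGraph

variable {V R : Type*} [Fintype V] (G : SimpleGraph V) [DecidableRel G.Adj]

theorem trace_mul_self_eq_two_mul_card_edgeFinset [NonAssocSemiring R] {A : Matrix V V R}
    (hA : ∀ i j, A i j * A j i = G.adjMatrix R i j) :
    (A * A).trace = 2 * #G.edgeFinset := by
  have hdiag : ∀ i, (A * A) i i = G.degree i := fun i => by
    simp [Matrix.mul_apply, hA, degree, neighborFinset_eq_filter, Finset.sum_boole]
  simp only [Matrix.trace, Matrix.diag_apply, hdiag]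
  rw [← Nat.cast_sum, G.sum_degrees_eq_twice_card_edges]
  push_cast; rfl

end SimpleGraph

section MeanSquare

variable {ι : Type*} [Fintype ι] [Nonempty ι] {x : ι → ℝ} {k : ℝ}

theorem sqrt_le_sup'_abs_of_sum_sq_eq (h : ∑ i, x i ^ 2 = Fintype.card ι * k) :
    √k ≤ univ.sup' univ_nonempty (fun i => |x i|) := by
  set ρ := univ.sup' univ_nonempty (fun i => |x i|)
  have hle : ∀ i, x i ^ 2 ≤ ρ ^ 2 := fun i => by
    rw [← sq_abs]
    exact pow_le_pow_left₀ (abs_nonneg _) (le_sup' (fun i => |x i|) (mem_univ i)) 2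
  have hmul : (Fintype.card ι : ℝ) * k ≤ Fintype.card ι * ρ ^ 2 := by
    simpa [h] using sum_le_sum fun i (_ : i ∈ univ) => hle i
  have hρ : 0 ≤ ρ :=
    (abs_nonneg _).trans (le_sup' (fun i => |x i|) (mem_univ (Classical.arbitrary ι)))
  rw [Real.sqrt_le_left hρ]
  exact le_of_mul_le_mul_left hmul (by positivity)

theorem sup'_abs_eq_sqrt_iff (h : ∑ i, x i ^ 2 = Fintype.card ι * k) :
    univ.sup' univ_nonempty (fun i => |x i|) = √k ↔ ∀ i, x i ^ 2 = k := by
  constructor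
  · intro hρ
    have hk : 0 ≤ k := by
      have := sum_nonneg fun i (_ : i ∈ univ) => sq_nonneg (x i)
      rw [h] at this
      exact nonneg_of_mul_nonneg_right this (by positivity)
    have hle : ∀ i ∈ univ, x i ^ 2 ≤ k := fun i _ => by
      rw [← Real.sqrt_le_sqrt_iff hk, Real.sqrt_sq_eq_abs, ← hρ]
      exact le_sup' (fun i => |x i|) (mem_univ i)
    have hsum : ∑ i, x i ^ 2 = ∑ _i : ι, k := by simp [h]
    exact fun i => (sum_eq_sum_iff_of_le hle).mp hsum i (mem_univ i)
  · intro hx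
    simp only [← Real.sqrt_sq_eq_abs, hx, sup'_const]

end MeanSquare

theorem stmt_7_general {n : ℕ} [NeZero n] (G : SimpleGraph (Fin n)) [DecidableRel G.Adj]
    (s : Fin n → Fin n → ℝ)
    (hsign : ∀ i j, G.Adj i j → s i j = 1 ∨ s i j = -1)
    (A : Matrix (Fin n) (Fin n) ℝ)
    (hA : ∀ i j, A i j = if G.Adj i j then s i j else 0)
    (hH : A.IsHermitian)
    (m : ℕ) (hm : m = G.edgeFinset.card)
    (ρ : ℝ) (hρ : ρ = Finset.univ.sup' Finset.univ_nonempty (fun i => |hH.eigenvalues i|)) :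
    Real.sqrt (2 * m / n) ≤ ρ ∧
      (ρ = Real.sqrt (2 * m / n) ↔ A * A = (2 * (m : ℝ) / n) • (1 : Matrix (Fin n) (Fin n) ℝ)) := by
  have hsq : ∀ i j, A i j * A j i = G.adjMatrix ℝ i j := fun i j => by
    rw [← hH.apply j i, star_trivial]
    by_cases h : G.Adj i j
    · rcases hsign i j h with hs | hs <;> simp [hA, h, hs]
    · simp [hA, h]
  have hsum : ∑ i, hH.eigenvalues i ^ 2 = Fintype.card (Fin n) * (2 * (m : ℝ) / n) := by
    have htr := hH.trace_mul_self
    rw [G.trace_mul_self_eq_two_mul_card_edgeFinset hsq, ← hm] at htr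
    simp only [RCLike.ofReal_real_eq_id, id] at htr
    rw [← htr, Fintype.card_fin]
    field_simp [NeZero.ne n]
  subst hρ
  rw [sup'_abs_eq_sqrt_iff hsum, hH.mul_self_eq_smul_one_iff]
  exact ⟨sqrt_le_sup'_abs_of_sum_sq_eq hsum, Iff.rfl⟩

/-- Gregory's bound: For a signed graph Γ on n vertices with m edges, the
spectral radius satisfies ρ(Γ) ≥ √(2m/n) = √k where k is the average degree, with equality
if and only if A(Γ)² = k·I (i.e. A(Γ) is a symmetric weighing matrix of weight k). -/
theorem stmt_7 {n : ℕ} [NeZero n] (G : SimpleGraph (Fin n)) [DecidableRel G.Adj]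
    (s : Fin n → Fin n → ℝ)
    (hssymm : ∀ i j, s i j = s j i)
    (hsign : ∀ i j, G.Adj i j → s i j = 1 ∨ s i j = -1)
    (A : Matrix (Fin n) (Fin n) ℝ)
    (hA : ∀ i j, A i j = if G.Adj i j then s i j else 0)
    (hH : A.IsHermitian)
    (m : ℕ) (hm : m = G.edgeFinset.card)
    (ρ : ℝ) (hρ : ρ = Finset.univ.sup' Finset.univ_nonempty (fun i => |hH.eigenvalues i|)) :
    Real.sqrt (2 * m / n) ≤ ρ ∧
      (ρ = Real.sqrt (2 * m / n) ↔ A * A = (2 * (m : ℝ) / n) • (1 : Matrix (Fin n) (Fin n) ℝ)) :=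
  stmt_7_general G s hsign A hA hH m hm ρ hρ
end

section
/- Define matrices A_n recursively by A_1 = [[0,1],[1,0]] and A_{n+1} = [[A_n, I],[I, -A_n]] (block matrix of size 2^{n+1}). Then A_n² = n·I_{2^n} for all n ≥ 1, and hence the eigenvalues of A_n are ±√n, each with multiplicity 2^{n-1}. -/
/-!
Writing `A` for `A_n`, the matrix `A_{n+1}` is the block matrix `[[A, 1], [1, -A]]`, whose square
is `[[A² + 1, 0], [0, A² + 1]]`; so `A_n² = n` follows by induction. Its characteristic matrix
`[[X - A, -1], [-1, X + A]]` has commuting lower blocks, hence determinant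
`det ((X - A) (X + A) - 1) = det ((X² - n - 1) • 1) = (X² - (n + 1)) ^ 2 ^ n`,
which splits as `(X - √(n+1)) ^ 2 ^ n (X + √(n+1)) ^ 2 ^ n`.
-/

/-- Huang's signed adjacency matrices of hypercubes: A_0 is the 1×1 zero matrix and
A_{n+1} = [[A_n, I],[I, -A_n]] (so A_1 = [[0,1],[1,0]]). -/
noncomputable def huangMatrix : (n : ℕ) → Matrix (Fin (2 ^ n)) (Fin (2 ^ n)) ℝ
  | 0 => 0
  | n + 1 =>
    Matrix.reindex
      ((finSumFinEquiv).trans (finCongr (by rw [pow_succ]; omega)))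
      ((finSumFinEquiv).trans (finCongr (by rw [pow_succ]; omega)))
      (Matrix.fromBlocks (huangMatrix n) 1 1 (-(huangMatrix n)))

open Polynomial

namespace Matrix

variable {R : Type*} [CommRing R] {n : Type*} [Fintype n] [DecidableEq n]

theorem fromBlocks_one_one_neg_mul_self (A : Matrix n n R) (c : R) (hA : A * A = c • 1) :
    fromBlocks A 1 1 (-A) * fromBlocks A 1 1 (-A) =
      (c + 1) • (1 : Matrix (n ⊕ n) (n ⊕ n) R) := by
  rw [fromBlocks_multiply, ← fromBlocks_one, fromBlocks_smul]
  simp only [Matrix.mul_one, Matrix.one_mul, Matrix.mul_neg, Matrix.neg_mul, neg_neg, hA,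
    smul_zero, add_neg_cancel, add_smul, one_smul, add_comm (1 : Matrix n n R)]

/-- Right multiplication by `[[D, 0], [-C, 1]]` clears the lower left block. -/
theorem det_fromBlocks_of_commute [IsDomain R] (A B C D : Matrix n n R) (hCD : Commute C D)
    (hD : D.det ≠ 0) : (fromBlocks A B C D).det = (A * D - B * C).det := by
  have hprod : fromBlocks A B C D * fromBlocks D 0 (-C) 1 = fromBlocks (A * D - B * C) B 0 D := by
    simp [fromBlocks_multiply, hCD.eq, sub_eq_add_neg]
  apply mul_right_cancel₀ hD
  calc (fromBlocks A B C D).det * D.det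
      = (fromBlocks A B C D * fromBlocks D 0 (-C) 1).det := by
        rw [det_mul, det_fromBlocks_zero₁₂, det_one, mul_one]
    _ = (A * D - B * C).det * D.det := by rw [hprod, det_fromBlocks_zero₂₁]

theorem charpoly_fromBlocks_one_one_neg [IsDomain R] (A : Matrix n n R) (c : R)
    (hA : A * A = c • 1) :
    (fromBlocks A 1 1 (-A)).charpoly = (X ^ 2 - C (c + 1)) ^ Fintype.card n := by
  set M := (C : R →+* R[X]).mapMatrix A
  have hM : M * M = scalar n (C c) := by
    rw [← map_mul, hA, smul_one_eq_diagonal]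
    ext i j
    by_cases h : i = j <;> simp [h]
  have hneg : charmatrix (-A) = scalar n X + M := by
    simp [charmatrix, M, sub_eq_add_neg, Matrix.map_neg]
  have hprod : (scalar n X - M) * (scalar n X + M) - -1 * -1 = scalar n (X ^ 2 - C (c + 1)) := by
    rw [sub_mul, mul_add, mul_add, (scalar_commute X (Commute.all X) M).eq, hM]
    simp only [map_sub, map_add, map_one, map_mul, sq, neg_one_mul, neg_neg]
    abel
  rw [charpoly, charmatrix_fromBlocks, Matrix.map_one _ (map_zero _) (map_one _),
    det_fromBlocks_of_commute _ _ _ _ (Commute.neg_one_left _) (charpoly_monic (-A)).ne_zero,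
    hneg, charmatrix, hprod, scalar_apply, det_diagonal, Finset.prod_const, Finset.card_univ]

end Matrix

open Matrix

theorem huangMatrix_mul_self (n : ℕ) : huangMatrix n * huangMatrix n = (n : ℝ) • 1 := by
  induction n with
  | zero => simp [huangMatrix]
  | succ n ih =>
    rw [huangMatrix, reindex_apply, submatrix_mul_equiv, fromBlocks_one_one_neg_mul_self _ _ ih]
    simp only [submatrix_smul, Pi.smul_apply, submatrix_one_equiv, Nat.cast_succ]

theorem charpoly_huangMatrix_succ (n : ℕ) :
    (huangMatrix (n + 1)).charpoly = (X ^ 2 - C ((n : ℝ) + 1)) ^ 2 ^ n := by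
  rw [huangMatrix, charpoly_reindex,
    charpoly_fromBlocks_one_one_neg _ _ (huangMatrix_mul_self n), Fintype.card_fin]

/-- For all n ≥ 1, A_n² = n·I, and hence the eigenvalues of A_n are ±√n, each
with multiplicity 2^{n-1}: the characteristic polynomial is (X - √n)^{2^{n-1}}·(X + √n)^{2^{n-1}}. -/
theorem stmt_9 (n : ℕ) (hn : 1 ≤ n) :
    huangMatrix n * huangMatrix n = (n : ℝ) • (1 : Matrix (Fin (2 ^ n)) (Fin (2 ^ n)) ℝ) ∧
      (huangMatrix n).charpoly =
        (Polynomial.X - Polynomial.C (Real.sqrt n)) ^ (2 ^ (n - 1)) *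
          (Polynomial.X + Polynomial.C (Real.sqrt n)) ^ (2 ^ (n - 1)) := by
  obtain ⟨m, rfl⟩ := Nat.exists_eq_add_of_le' hn
  refine ⟨huangMatrix_mul_self _, ?_⟩
  have hsqrt : C ((m : ℝ) + 1) = C √((m + 1 : ℕ) : ℝ) ^ 2 := by
    rw [← C_pow, Real.sq_sqrt (Nat.cast_nonneg _), Nat.cast_succ]
  rw [charpoly_huangMatrix_succ, Nat.add_sub_cancel, hsqrt, ← mul_pow]
  ring
end

section
/- Let G be a graph with n vertices. The average, over all 2^{|E(G)|} signatures σ of G, of the characteristic polynomials of the signed adjacency matrices A_σ equals the matching polynomial μ_G(x) = ∑_{k≥0} (-1)^k m_k x^{n-2k}, where m_k is the number of k-edge matchings of G. -/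
/-!
Expand `det (X - A_σ)` over permutations `π`. Averaging over `σ` kills every `π` that uses some
edge an odd number of times: if `π i ≠ i` is not adjacent to `i` the term is `0`, and if the edge
`{π i, i}` is used only once (`π (π i) ≠ i`), flipping its sign negates the term. The surviving `π`
are the involutions whose 2-cycles form a matching `M` of `G`; for these the term does not depend
on `σ`: it is `sign π * X ^ #fixed = (-1) ^ #M * X ^ (n - 2 * #M)`.
-/

open Finset Polynomial Equiv

namespace Sym2

variable {α : Type*} [DecidableEq α]

def swap : Sym2 α → Perm α :=
  Sym2.lift ⟨fun a b => Equiv.swap a b, fun a b => Equiv.swap_comm a b⟩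

lemma swap_apply_of_notMem {e : Sym2 α} {x : α} (hx : x ∉ e) : e.swap x = x := by
  induction e using Sym2.ind with
  | _ a b =>
    simp only [mem_iff, not_or] at hx
    exact Equiv.swap_apply_of_ne_of_ne hx.1 hx.2

lemma sign_swap [Fintype α] {e : Sym2 α} (he : ¬ e.IsDiag) : Perm.sign e.swap = -1 := by
  induction e using Sym2.ind with
  | _ a b => exact Perm.sign_swap (by simpa using he)

end Sym2

variable {α : Type*}

def IsVertexDisjoint (M : Finset (Sym2 α)) : Prop :=
  ∀ e ∈ M, ∀ f ∈ M, e ≠ f → ∀ v : α, ¬(v ∈ e ∧ v ∈ f)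

variable [DecidableEq α]

lemma IsVertexDisjoint.pairwise_commute_swap {M : Finset (Sym2 α)} (h : IsVertexDisjoint M) :
    (M : Set (Sym2 α)).Pairwise (Function.onFun Commute Sym2.swap) := by
  intro e he f hf hef
  refine Perm.Disjoint.commute fun x => ?_
  by_cases hxe : x ∈ e
  · exact .inr (Sym2.swap_apply_of_notMem fun hxf => h e he f hf hef x ⟨hxe, hxf⟩)
  · exact .inl (Sym2.swap_apply_of_notMem hxe)

open scoped Classical in
noncomputable def matchingPerm (M : Finset (Sym2 α)) : Perm α :=
  if h : IsVertexDisjoint M then M.noncommProd Sym2.swap h.pairwise_commute_swap else 1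

lemma noncommProd_swap_apply_of_forall_notMem {M : Finset (Sym2 α)} (comm) {a : α}
    (ha : ∀ e ∈ M, a ∉ e) : M.noncommProd Sym2.swap comm a = a :=
  M.noncommProd_induction _ comm (fun g : Perm α => g a = a) (fun g g' hg hg' => by simp [hg, hg'])
    rfl fun e he => Sym2.swap_apply_of_notMem (ha e he)

section MatchingPerm

variable {M : Finset (Sym2 α)} (hM : IsVertexDisjoint M)
include hM

lemma matchingPerm_eq : matchingPerm M = M.noncommProd Sym2.swap hM.pairwise_commute_swap := by
  rw [matchingPerm, dif_pos hM]

lemma matchingPerm_apply_of_forall_notMem {a : α} (ha : ∀ e ∈ M, a ∉ e) :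
    matchingPerm M a = a := by
  rw [matchingPerm_eq hM]
  exact noncommProd_swap_apply_of_forall_notMem _ ha

lemma matchingPerm_apply_of_mem {a b : α} (hab : s(a, b) ∈ M) : matchingPerm M a = b := by
  have hrest : ∀ f ∈ M.erase s(a, b), a ∉ f := fun f hf haf =>
    hM _ hab f (mem_of_mem_erase hf) (ne_of_mem_erase hf).symm a ⟨Sym2.mem_mk_left a b, haf⟩
  rw [matchingPerm_eq hM, ← mul_noncommProd_erase M hab, Perm.mul_apply]
  exact (congrArg _ (noncommProd_swap_apply_of_forall_notMem _ hrest)).trans (swap_apply_left a b)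

lemma involutive_matchingPerm : Function.Involutive (matchingPerm M) := by
  intro a
  by_cases ha : ∃ e ∈ M, a ∈ e
  · obtain ⟨e, he, hae⟩ := ha
    obtain ⟨b, rfl⟩ := Sym2.mem_iff_exists.mp hae
    rw [matchingPerm_apply_of_mem hM he, matchingPerm_apply_of_mem hM (Sym2.eq_swap ▸ he)]
  · push Not at ha
    rw [matchingPerm_apply_of_forall_notMem hM ha, matchingPerm_apply_of_forall_notMem hM ha]

variable (hdiag : ∀ e ∈ M, ¬ e.IsDiag)
include hdiag

lemma matchingPerm_apply_ne_iff {a : α} : matchingPerm M a ≠ a ↔ ∃ e ∈ M, a ∈ e := by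
  refine ⟨fun h => ?_, fun ⟨e, he, hae⟩ => ?_⟩
  · by_contra! hcon
    exact h (matchingPerm_apply_of_forall_notMem hM hcon)
  · obtain ⟨b, rfl⟩ := Sym2.mem_iff_exists.mp hae
    rw [matchingPerm_apply_of_mem hM he]
    exact fun hba => hdiag _ he (hba ▸ Sym2.mk_isDiag_iff.mpr rfl)

lemma mk_apply_matchingPerm_mem {a : α} (ha : matchingPerm M a ≠ a) :
    s(a, matchingPerm M a) ∈ M := by
  obtain ⟨e, he, hae⟩ := (matchingPerm_apply_ne_iff hM hdiag).mp ha
  obtain ⟨b, rfl⟩ := Sym2.mem_iff_exists.mp hae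
  rwa [matchingPerm_apply_of_mem hM he]

variable [Fintype α]

lemma sign_matchingPerm : Perm.sign (matchingPerm M) = (-1) ^ #M := by
  rw [matchingPerm_eq hM, map_noncommProd, noncommProd_eq_prod,
    prod_congr rfl fun e he => Sym2.sign_swap (hdiag e he), prod_const]

lemma card_support_matchingPerm : #(matchingPerm M).support = 2 * #M := by
  have hsupp : (matchingPerm M).support = M.biUnion Sym2.toFinset := by
    ext a
    simp [matchingPerm_apply_ne_iff hM hdiag]
  rw [hsupp, card_biUnion, sum_congr rfl fun e he => Sym2.card_toFinset_of_not_isDiag e (hdiag e he),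
    sum_const, smul_eq_mul, mul_comm]
  intro e he f hf hef
  exact disjoint_left.mpr fun v hve hvf =>
    hM e he f hf hef v ⟨Sym2.mem_toFinset.mp hve, Sym2.mem_toFinset.mp hvf⟩

end MatchingPerm

section MovedEdges

variable [Fintype α]

def movedEdges (π : Perm α) : Finset (Sym2 α) :=
  π.support.image fun a => s(a, π a)

lemma movedEdges_matchingPerm {M : Finset (Sym2 α)} (hM : IsVertexDisjoint M)
    (hdiag : ∀ e ∈ M, ¬ e.IsDiag) : movedEdges (matchingPerm M) = M := by
  ext e
  simp only [movedEdges, mem_image, Perm.mem_support]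
  refine ⟨fun ⟨a, ha, hae⟩ => hae ▸ mk_apply_matchingPerm_mem hM hdiag ha, fun he => ?_⟩
  induction e using Sym2.ind with
  | _ a b =>
    have hab := matchingPerm_apply_of_mem hM he
    exact ⟨a, (matchingPerm_apply_ne_iff hM hdiag).mpr ⟨_, he, Sym2.mem_mk_left a b⟩, hab ▸ rfl⟩

lemma not_isDiag_of_mem_movedEdges {π : Perm α} {e : Sym2 α} (he : e ∈ movedEdges π) :
    ¬ e.IsDiag := by
  obtain ⟨a, ha, rfl⟩ := mem_image.mp he
  exact fun hdiag => Perm.mem_support.mp ha (Sym2.mk_isDiag_iff.mp hdiag).symm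

namespace Function.Involutive

variable {π : Perm α} (hπ : Function.Involutive π)
include hπ

lemma eq_of_mem_movedEdges {v : α} {e : Sym2 α} (he : e ∈ movedEdges π) (hv : v ∈ e) :
    e = s(v, π v) := by
  obtain ⟨a, -, rfl⟩ := mem_image.mp he
  rcases Sym2.mem_iff.mp hv with rfl | rfl
  · rfl
  · rw [hπ a, Sym2.eq_swap]

lemma isVertexDisjoint_movedEdges : IsVertexDisjoint (movedEdges π) :=
  fun _ he _ hf hef _ ⟨hve, hvf⟩ =>
    hef ((hπ.eq_of_mem_movedEdges he hve).trans (hπ.eq_of_mem_movedEdges hf hvf).symm)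

lemma matchingPerm_movedEdges : matchingPerm (movedEdges π) = π := by
  ext a
  by_cases ha : π a = a
  · rw [ha]
    refine matchingPerm_apply_of_forall_notMem hπ.isVertexDisjoint_movedEdges fun e he hae => ?_
    refine not_isDiag_of_mem_movedEdges he ?_
    rw [hπ.eq_of_mem_movedEdges he hae, ha]
    exact Sym2.mk_isDiag_iff.mpr rfl
  · exact matchingPerm_apply_of_mem hπ.isVertexDisjoint_movedEdges
      (mem_image_of_mem _ (Perm.mem_support.mpr ha))

end Function.Involutive

end MovedEdges

namespace SimpleGraph

variable {V : Type*} [Fintype V] (G : SimpleGraph V) [DecidableRel G.Adj]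

def signedAdjMatrix (R : Type*) [Ring R] (σ : G.edgeFinset → Bool) : Matrix V V R :=
  Matrix.of fun i j =>
    if h : G.Adj i j then (if σ ⟨s(i, j), by simpa using h⟩ then 1 else -1) else 0

def IsMatchingPerm (π : Perm V) : Prop :=
  Function.Involutive π ∧ ∀ i, π i ≠ i → G.Adj (π i) i

section SignedAdjMatrix

variable {G} {R : Type*} [Ring R] (σ : G.edgeFinset → Bool)

lemma signedAdjMatrix_apply_of_not_adj {i j : V} (h : ¬ G.Adj i j) :
    G.signedAdjMatrix R σ i j = 0 := by
  simp [signedAdjMatrix, h]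

lemma signedAdjMatrix_apply_mul_apply_swap {i j : V} (h : G.Adj i j) :
    G.signedAdjMatrix R σ i j * G.signedAdjMatrix R σ j i = 1 := by
  have hedge : (⟨s(j, i), by simpa using h.symm⟩ : G.edgeFinset) = ⟨s(i, j), by simpa using h⟩ :=
    Subtype.ext Sym2.eq_swap
  simp only [signedAdjMatrix, Matrix.of_apply, dif_pos h, dif_pos h.symm, hedge]
  split_ifs <;> simp

variable [DecidableEq V]

lemma signedAdjMatrix_update_apply (e : G.edgeFinset) (i j : V) :
    G.signedAdjMatrix R (Function.update σ e (!σ e)) i j =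
      if s(i, j) = e then -G.signedAdjMatrix R σ i j else G.signedAdjMatrix R σ i j := by
  by_cases h : G.Adj i j
  · simp only [signedAdjMatrix, Matrix.of_apply, dif_pos h, Function.update_apply,
      ← Subtype.val_inj]
    split_ifs with he <;> cases σ e <;> simp_all
  · simp [signedAdjMatrix_apply_of_not_adj _ h]

end SignedAdjMatrix

variable {G} [DecidableEq V] {R : Type*} [CommRing R]

lemma IsMatchingPerm.movedEdges_subset {π : Perm V} (hπ : G.IsMatchingPerm π) :
    movedEdges π ⊆ G.edgeFinset := by
  intro e he
  obtain ⟨a, ha, rfl⟩ := mem_image.mp he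
  simpa using (hπ.2 a (Perm.mem_support.mp ha)).symm

lemma isMatchingPerm_matchingPerm {M : Finset (Sym2 V)} (hsub : M ⊆ G.edgeFinset)
    (hM : IsVertexDisjoint M) : G.IsMatchingPerm (matchingPerm M) := by
  refine ⟨involutive_matchingPerm hM, fun a ha => ?_⟩
  have hedge := mem_edgeFinset.mp
    (hsub (mk_apply_matchingPerm_mem hM (fun e he => G.not_isDiag_of_mem_edgeFinset (hsub he)) ha))
  exact (G.mem_edgeSet.mp hedge).symm

lemma sum_filter_isMatchingPerm {β : Type*} [AddCommMonoid β] [DecidablePred G.IsMatchingPerm]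
    [DecidablePred (IsVertexDisjoint (α := V))] (f : Perm V → β) :
    ∑ π ∈ univ.filter G.IsMatchingPerm, f π =
      ∑ M ∈ G.edgeFinset.powerset.filter IsVertexDisjoint, f (matchingPerm M) := by
  refine (sum_nbij' matchingPerm movedEdges (fun M hM => ?_) (fun π hπ => ?_)
    (fun M hM => ?_) (fun π hπ => ?_) fun _ _ => rfl).symm
  · rw [mem_filter, mem_powerset] at hM
    exact mem_filter.mpr ⟨mem_univ _, isMatchingPerm_matchingPerm hM.1 hM.2⟩
  · have hπ := (mem_filter.mp hπ).2
    exact mem_filter.mpr ⟨mem_powerset.mpr hπ.movedEdges_subset, hπ.1.isVertexDisjoint_movedEdges⟩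
  · rw [mem_filter, mem_powerset] at hM
    exact movedEdges_matchingPerm hM.2 fun e he => G.not_isDiag_of_mem_edgeFinset (hM.1 he)
  · exact (mem_filter.mp hπ).2.1.matchingPerm_movedEdges

lemma IsMatchingPerm.prod_charmatrix_signedAdjMatrix {π : Perm V} (hπ : G.IsMatchingPerm π)
    (σ : G.edgeFinset → Bool) :
    ∏ i, (G.signedAdjMatrix R σ).charmatrix (π i) i = X ^ (Fintype.card V - #π.support) := by
  have hmoved : ∏ i ∈ π.support, (G.signedAdjMatrix R σ).charmatrix (π i) i = 1 := by
    refine prod_involution (fun a _ => π a) (fun a ha => ?_) (fun a ha _ => Perm.mem_support.mp ha)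
      (fun a ha => Perm.apply_mem_support.mpr ha) (fun a _ => hπ.1 a)
    have ha := Perm.mem_support.mp ha
    rw [Matrix.charmatrix_apply_ne _ _ _ ha, hπ.1 a, Matrix.charmatrix_apply_ne _ _ _ (Ne.symm ha),
      neg_mul_neg, ← map_mul, signedAdjMatrix_apply_mul_apply_swap σ (hπ.2 a ha), map_one]
  have hfixed : ∀ i ∈ π.supportᶜ, (G.signedAdjMatrix R σ).charmatrix (π i) i = X := by
    intro i hi
    rw [Perm.notMem_support.mp (mem_compl.mp hi), Matrix.charmatrix_apply_eq,
      signedAdjMatrix_apply_of_not_adj σ (G.irrefl), map_zero, sub_zero]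
  rw [← prod_mul_prod_compl π.support, hmoved, one_mul, prod_congr rfl hfixed, prod_const,
    card_compl]

lemma prod_charmatrix_signedAdjMatrix_update {π : Perm V} {i₀ : V} (hmoved : π i₀ ≠ i₀)
    (hnot : π (π i₀) ≠ i₀) (e : G.edgeFinset) (he : (e : Sym2 V) = s(π i₀, i₀))
    (σ : G.edgeFinset → Bool) :
    ∏ i, (G.signedAdjMatrix R (Function.update σ e (!σ e))).charmatrix (π i) i =
      -∏ i, (G.signedAdjMatrix R σ).charmatrix (π i) i := by
  have hedge : ∀ i, s(π i, i) = e → i = i₀ := by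
    intro i h
    rcases Sym2.eq_iff.mp (h.trans he) with ⟨-, h⟩ | ⟨h₁, h₂⟩
    · exact h
    · exact absurd (by rw [← h₂, h₁]) hnot
  have hentry : ∀ i, (G.signedAdjMatrix R (Function.update σ e (!σ e))).charmatrix (π i) i =
      if i = i₀ then -(G.signedAdjMatrix R σ).charmatrix (π i) i
      else (G.signedAdjMatrix R σ).charmatrix (π i) i := by
    intro i
    split_ifs with hi
    · subst hi
      rw [Matrix.charmatrix_apply_ne _ _ _ hmoved, Matrix.charmatrix_apply_ne _ _ _ hmoved,
        signedAdjMatrix_update_apply, if_pos he.symm, map_neg]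
    · rw [Matrix.charmatrix_apply, Matrix.charmatrix_apply, signedAdjMatrix_update_apply,
        if_neg fun h => hi (hedge i h)]
  rw [← mul_prod_erase univ _ (mem_univ i₀), hentry, if_pos rfl,
    prod_congr rfl fun i hi => (hentry i).trans (if_neg (ne_of_mem_erase hi)), neg_mul,
    mul_prod_erase univ (fun i => (G.signedAdjMatrix R σ).charmatrix (π i) i) (mem_univ i₀)]

lemma sum_prod_charmatrix_signedAdjMatrix_eq_zero {π : Perm V} (hπ : ¬ G.IsMatchingPerm π) :
    ∑ σ : G.edgeFinset → Bool, ∏ i, (G.signedAdjMatrix R σ).charmatrix (π i) i = 0 := by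
  by_cases hadj : ∀ i, π i ≠ i → G.Adj (π i) i
  · obtain ⟨i₀, hnot⟩ : ∃ i₀, π (π i₀) ≠ i₀ := by
      by_contra! h
      exact hπ ⟨h, hadj⟩
    have hmoved : π i₀ ≠ i₀ := fun h => hnot (by rw [h, h])
    let e : G.edgeFinset := ⟨s(π i₀, i₀), mem_edgeFinset.mpr (hadj i₀ hmoved)⟩
    refine sum_involution (fun σ _ => Function.update σ e (!σ e)) (fun σ _ => ?_)
      (fun σ _ _ h => ?_) (fun _ _ => mem_univ _) (fun σ _ => by simp)
    · rw [prod_charmatrix_signedAdjMatrix_update hmoved hnot e rfl, add_neg_cancel]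
    · simpa using congrFun h e
  · push Not at hadj
    obtain ⟨j, hj, hnadj⟩ := hadj
    refine sum_eq_zero fun σ _ => prod_eq_zero (mem_univ j) ?_
    rw [Matrix.charmatrix_apply_ne _ _ _ hj, signedAdjMatrix_apply_of_not_adj σ hnadj, map_zero,
      neg_zero]

variable (G R) in
theorem sum_charpoly_signedAdjMatrix [DecidablePred (IsVertexDisjoint (α := V))] :
    ∑ σ : G.edgeFinset → Bool, (G.signedAdjMatrix R σ).charpoly =
      2 ^ #G.edgeFinset • ∑ M ∈ G.edgeFinset.powerset.filter IsVertexDisjoint,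
        (-1 : R[X]) ^ #M * X ^ (Fintype.card V - 2 * #M) := by
  classical
  calc ∑ σ : G.edgeFinset → Bool, (G.signedAdjMatrix R σ).charpoly
      = ∑ π : Perm V, Perm.sign π • ∑ σ : G.edgeFinset → Bool,
          ∏ i, (G.signedAdjMatrix R σ).charmatrix (π i) i := by
        simp only [Matrix.charpoly, Matrix.det_apply, smul_sum]
        exact sum_comm
    _ = ∑ π ∈ univ.filter G.IsMatchingPerm, Perm.sign π • ∑ σ : G.edgeFinset → Bool,
          ∏ i, (G.signedAdjMatrix R σ).charmatrix (π i) i := by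
        refine (sum_filter_of_ne fun π _ h => ?_).symm
        by_contra hπ
        exact h (by rw [sum_prod_charmatrix_signedAdjMatrix_eq_zero hπ, smul_zero])
    _ = ∑ π ∈ univ.filter G.IsMatchingPerm,
          2 ^ #G.edgeFinset • (Perm.sign π • X ^ (Fintype.card V - #π.support)) := by
        refine sum_congr rfl fun π hπ => ?_
        rw [sum_congr rfl fun σ _ => (mem_filter.mp hπ).2.prod_charmatrix_signedAdjMatrix σ,
          sum_const, card_univ, Fintype.card_fun, Fintype.card_bool, Fintype.card_coe, smul_comm]
    _ = ∑ M ∈ G.edgeFinset.powerset.filter IsVertexDisjoint, 2 ^ #G.edgeFinset •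
          (Perm.sign (matchingPerm M) • X ^ (Fintype.card V - #(matchingPerm M).support)) :=
        sum_filter_isMatchingPerm _
    _ = ∑ M ∈ G.edgeFinset.powerset.filter IsVertexDisjoint,
          2 ^ #G.edgeFinset • ((-1 : R[X]) ^ #M * X ^ (Fintype.card V - 2 * #M)) := by
        refine sum_congr rfl fun M hM => ?_
        rw [mem_filter, mem_powerset] at hM
        have hdiag e (he : e ∈ M) := G.not_isDiag_of_mem_edgeFinset (hM.1 he)
        rw [sign_matchingPerm hM.2 hdiag, card_support_matchingPerm hM.2 hdiag]
        simp [Units.smul_def, zsmul_eq_mul]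
    _ = _ := smul_sum.symm

end SimpleGraph

open scoped Classical in
/-- Godsil–Gutman: For a graph G on n vertices, the average over all 2^|E(G)|
signatures σ of the characteristic polynomials of the signed adjacency matrices A_σ equals
the matching polynomial μ_G(x) = ∑_k (-1)^k m_k x^{n-2k}, where m_k is the number of
k-edge matchings (here the sum over matchings M contributes (-1)^{|M|} x^{n-2|M|}). -/
theorem stmt_10 {n : ℕ} (G : SimpleGraph (Fin n)) [DecidableRel G.Adj] :
    ((2 : ℝ) ^ G.edgeFinset.card)⁻¹ •
      ∑ σ : G.edgeFinset → Bool,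
        (Matrix.charpoly (Matrix.of (fun i j : Fin n =>
          if h : G.Adj i j then (if σ ⟨s(i, j), by simpa using h⟩ then (1 : ℝ) else -1) else 0)))
      = ∑ M ∈ G.edgeFinset.powerset.filter
            (fun M => ∀ e ∈ M, ∀ f ∈ M, e ≠ f → ∀ v : Fin n, ¬(v ∈ e ∧ v ∈ f)),
          (-1 : Polynomial ℝ) ^ M.card * Polynomial.X ^ (n - 2 * M.card) := by
  have h := G.sum_charpoly_signedAdjMatrix ℝ
  rw [Fintype.card_fin] at h
  change ((2 : ℝ) ^ #G.edgeFinset)⁻¹ • ∑ σ, (G.signedAdjMatrix ℝ σ).charpoly = _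
  rw [h, ← Nat.cast_smul_eq_nsmul ℝ, smul_smul, Nat.cast_pow, Nat.cast_ofNat,
    inv_mul_cancel₀ (by positivity), one_smul]
  congr 1
  exact filter_congr fun _ _ => Iff.rfl
end

section
/- For every integer k ≥ 3, the signed toroidal tessellation T_{2k} on 2k vertices has characteristic polynomial (x-2)^k (x+2)^k; in particular T_{2k} is a 4-regular signed graph with exactly two distinct adjacency eigenvalues 2 and -2, each of multiplicity k, equivalently A(T_{2k})² = 4I. -/
/-- The signed adjacency matrix of the toroidal tessellation T_{2k}: the vertices are
(i,a) with i ∈ ℤ_k, a ∈ ℤ_2, each vertex (i,a) being adjacent to the two vertices on each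
of the adjacent rings i+1 and i-1 (a 4-regular quadrangulation of the torus), with signs
given by the block pattern B = [[1,1],[-1,-1]]. -/
def toroidalT (k : ℕ) [NeZero k] : Matrix (ZMod k × Fin 2) (ZMod k × Fin 2) ℝ :=
  Matrix.of fun p q =>
    if q.1 = p.1 + 1 then (if p.2 = 0 then 1 else -1)
    else if q.1 = p.1 - 1 then (if q.2 = 0 then 1 else -1)
    else 0

/-!
Write `A = S ⊗ B + Sᵀ ⊗ Bᵀ`, where `S` is the cyclic shift `i ↦ i + 1` of `ℤ_k` and
`B = [[1,1],[-1,-1]]`; this needs `k ≥ 3`, so that the rings `i + 1` and `i - 1` differ.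
As `S` is orthogonal, `B² = 0` and `BBᵀ + BᵀB = 4I`, the cross terms of `A²` cancel and
`A² = 4I`. Swapping the two vertices of every ring conjugates `A` to `-A`, so
`χ_A² = χ_A χ_{-A} = det ((X - A)(X + A)) = (X² - 4)^{2k}`, and `χ_A` is the monic square root
`(X - 2)^k (X + 2)^k`.
-/

open Matrix Polynomial Kronecker

theorem Polynomial.Monic.eq_of_sq_eq_sq {R : Type*} [CommRing R] [IsDomain R] [NeZero (2 : R)]
    {p q : R[X]} (hp : p.Monic) (hq : q.Monic) (h : p ^ 2 = q ^ 2) : p = q := by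
  refine (sq_eq_sq_iff_eq_or_eq_neg.mp h).resolve_right fun hneg => two_ne_zero (α := R) ?_
  have := hp.leadingCoeff
  rw [hneg, leadingCoeff_neg, hq.leadingCoeff] at this
  linear_combination -this

namespace Matrix

variable {m n R : Type*}

theorem isSymm_kronecker_add_kronecker_transpose [Mul R] [AddCommMagma R]
    (S : Matrix m m R) (B : Matrix n n R) : (S ⊗ₖ B + Sᵀ ⊗ₖ Bᵀ).IsSymm := by
  rw [IsSymm, transpose_add, ← kroneckerMap_transpose, ← kroneckerMap_transpose,
    transpose_transpose, transpose_transpose, add_comm]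

variable [Fintype m] [Fintype n] [DecidableEq m] [DecidableEq n] [CommRing R]

theorem kronecker_add_kronecker_transpose_mul_self {S : Matrix m m R} {B : Matrix n n R}
    (hS : S * Sᵀ = 1) (hB : B * B = 0) {c : R} (hc : B * Bᵀ + Bᵀ * B = c • 1) :
    (S ⊗ₖ B + Sᵀ ⊗ₖ Bᵀ) * (S ⊗ₖ B + Sᵀ ⊗ₖ Bᵀ) = c • 1 := by
  have hS' : Sᵀ * S = 1 := mul_eq_one_comm.mp hS
  have hB' : Bᵀ * Bᵀ = 0 := by rw [← transpose_mul, hB, transpose_zero]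
  simp only [add_mul, mul_add, ← mul_kronecker_mul, hS, hS', hB, hB', kronecker_zero]
  rw [zero_add, add_zero, ← kronecker_add, add_comm, hc, kronecker_smul, one_kronecker_one]

theorem charmatrix_mul_charmatrix_neg {A : Matrix n n R} {c : R} (h : A * A = c • 1) :
    charmatrix A * charmatrix (-A) = scalar n (X ^ 2 - C c) := by
  have hsq : (C : R →+* R[X]).mapMatrix A * (C : R →+* R[X]).mapMatrix A = scalar n (C c) := by
    rw [← map_mul, h]
    ext i j
    by_cases hij : i = j <;> simp [hij]
  rw [charmatrix, charmatrix, map_neg, sub_neg_eq_add, sub_mul, mul_add, mul_add,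
    ← (scalar_commute (X : R[X]) (fun _ => mul_comm _ _) (C.mapMatrix A)).eq, hsq, map_sub,
    pow_two, map_mul]
  abel

theorem charpoly_mul_charpoly_neg {A : Matrix n n R} {c : R} (h : A * A = c • 1) :
    A.charpoly * (-A).charpoly = (X ^ 2 - C c) ^ Fintype.card n := by
  rw [charpoly, charpoly, ← det_mul, charmatrix_mul_charmatrix_neg h, scalar_apply,
    det_diagonal, Finset.prod_const, Finset.card_univ]

theorem charpoly_eq_of_mul_self_eq_sq_smul_one [IsDomain R] [NeZero (2 : R)]
    {A : Matrix n n R} {r : R} {k : ℕ} (hA : A * A = r ^ 2 • 1) (hneg : (-A).charpoly = A.charpoly)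
    (hcard : Fintype.card n = 2 * k) :
    A.charpoly = (X - C r) ^ k * (X + C r) ^ k := by
  refine A.charpoly_monic.eq_of_sq_eq_sq
    (((monic_X_sub_C r).pow k).mul ((monic_X_add_C r).pow k)) ?_
  have h := charpoly_mul_charpoly_neg hA
  rw [hneg, hcard, C_pow] at h
  rw [sq, h, show (X ^ 2 - C r ^ 2 : R[X]) = (X - C r) * (X + C r) by ring,
    ← mul_pow, ← pow_mul, mul_comm k]

end Matrix

theorem ZMod.add_one_ne_sub_one {k : ℕ} (hk : 3 ≤ k) (i : ZMod k) : i + 1 ≠ i - 1 := by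
  intro h
  have h2 : ((2 : ℕ) : ZMod k) = 0 := by push_cast; linear_combination h
  have := Nat.le_of_dvd two_pos ((ZMod.natCast_eq_zero_iff 2 k).mp h2)
  omega

section Toroidal

variable (k : ℕ) [NeZero k]

theorem toroidalT_eq_kronecker (hk : 3 ≤ k) :
    toroidalT k = (Equiv.addRight 1).permMatrix ℝ ⊗ₖ !![1, 1; -1, -1] +
      ((Equiv.addRight 1).permMatrix ℝ)ᵀ ⊗ₖ !![1, 1; -1, -1]ᵀ := by
  ext ⟨i, a⟩ ⟨j, b⟩
  have hne := ZMod.add_one_ne_sub_one hk i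
  fin_cases a <;> fin_cases b <;>
    simp [toroidalT, PEquiv.toMatrix_apply, ← sub_eq_add_neg, eq_comm (b := j)] <;>
    split_ifs <;> simp_all

theorem toroidalT_isSymm (hk : 3 ≤ k) : (toroidalT k).IsSymm := by
  rw [toroidalT_eq_kronecker k hk]
  exact isSymm_kronecker_add_kronecker_transpose _ _

theorem toroidalT_mul_self (hk : 3 ≤ k) : toroidalT k * toroidalT k = (4 : ℝ) • 1 := by
  rw [toroidalT_eq_kronecker k hk]
  refine kronecker_add_kronecker_transpose_mul_self ?_ ?_ ?_
  · rw [transpose_permMatrix, ← permMatrix_mul, inv_mul_cancel, permMatrix_one]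
  · ext i j; fin_cases i <;> fin_cases j <;> simp [mul_apply]
  · ext i j; fin_cases i <;> fin_cases j <;> simp [mul_apply, vecMul, dotProduct] <;> norm_num

theorem toroidalT_ne_zero_iff (p q : ZMod k × Fin 2) :
    toroidalT k p q ≠ 0 ↔ q.1 = p.1 + 1 ∨ q.1 = p.1 - 1 := by
  simp only [toroidalT, of_apply]
  split_ifs <;> simp_all

theorem card_filter_toroidalT_ne_zero (hk : 3 ≤ k) (p : ZMod k × Fin 2) :
    (Finset.univ.filter (fun q => toroidalT k p q ≠ 0)).card = 4 := by
  have : Finset.univ.filter (fun q => toroidalT k p q ≠ 0) =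
      ({p.1 + 1, p.1 - 1} : Finset (ZMod k)) ×ˢ Finset.univ := by
    ext q; simp [toroidalT_ne_zero_iff]
  rw [this, Finset.card_product, Finset.card_pair (ZMod.add_one_ne_sub_one hk p.1)]
  rfl

theorem reindex_swap_toroidalT :
    reindex ((Equiv.refl _).prodCongr (Equiv.swap 0 1))
      ((Equiv.refl _).prodCongr (Equiv.swap 0 1)) (toroidalT k) = -toroidalT k := by
  ext ⟨i, a⟩ ⟨j, b⟩
  simp only [reindex_apply, submatrix_apply, Equiv.prodCongr_symm, Equiv.prodCongr_apply,
    Equiv.refl_symm, Equiv.coe_refl, Prod.map, id_eq, Equiv.symm_swap, toroidalT, of_apply]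
  fin_cases a <;> fin_cases b <;> split_ifs <;> simp_all

theorem charpoly_neg_toroidalT : (-toroidalT k).charpoly = (toroidalT k).charpoly := by
  rw [← reindex_swap_toroidalT, charpoly_reindex]

end Toroidal

/-- For every k ≥ 3, the signed toroidal tessellation T_{2k} on 2k vertices is
4-regular, its characteristic polynomial is (x-2)^k (x+2)^k, so it has exactly the two
distinct eigenvalues 2 and -2, each of multiplicity k; equivalently A(T_{2k})² = 4·I. -/
theorem stmt_13 (k : ℕ) [NeZero k] (hk : 3 ≤ k) :
    (toroidalT k).IsSymm ∧
    (∀ p, (Finset.univ.filter (fun q => toroidalT k p q ≠ 0)).card = 4) ∧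
    toroidalT k * toroidalT k = (4 : ℝ) • (1 : Matrix (ZMod k × Fin 2) (ZMod k × Fin 2) ℝ) ∧
    (toroidalT k).charpoly =
      (Polynomial.X - Polynomial.C (2 : ℝ)) ^ k * (Polynomial.X + Polynomial.C (2 : ℝ)) ^ k := by
  have hsq := toroidalT_mul_self k hk
  refine ⟨toroidalT_isSymm k hk, card_filter_toroidalT_ne_zero k hk, hsq, ?_⟩
  refine charpoly_eq_of_mul_self_eq_sq_smul_one (by norm_num [hsq]) (charpoly_neg_toroidalT k) ?_
  simp [ZMod.card, mul_comm]
end
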